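/- For all natural numbers n, the sum over k from 0 to n of C(n,k)^2 * C(2n+k, k) * (H_{2n+k} - H_k) equals 2 * C(2n,n)^2 * (H_{2n} - H_n). -/

import Mathlib

/-!
The harmonic sums are derivatives: `d/dx C(x + c + m, m)` at `x = 0` equals
`C(c + m, m) (H_{c+m} - H_c)`. So the identity is the coefficient of `x` in the polynomial
identity `∑ₖ C(n,k)² C(x + k + 2n, 2n) = C(x + 2n, n)²`, which it suffices to check at
natural `x`. There, with `y = x + 2n`, Vandermonde gives `C(y + k, 2n) = ∑ᵢ C(k,i) C(y, 2n-i)`,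
and summing against `C(n,k)²` with `∑ₖ C(n,k)² C(k,i) = C(n,i) C(2n-i, n)` produces the
expansion `C(y,n)² = ∑ᵢ C(n,i) C(2n-i, n) C(y, 2n-i)`, which also follows from
`C(y,n) = ∑ᵢ C(n,i) C(y-n, n-i)`.
-/

open Finset

def harmonicQ (m : Nat) : ℚ := ∑ j ∈ Finset.range m, (1 : ℚ) / (j + 1)

namespace Nat

theorem add_choose_eq_sum_range (m n k : ℕ) :
    (m + n).choose k = ∑ i ∈ range (k + 1), m.choose i * n.choose (k - i) := by
  rw [add_choose_eq, Finset.Nat.sum_antidiagonal_eq_sum_range_succ_mk]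

theorem sum_range_choose_sq_mul_choose (n i : ℕ) :
    ∑ k ∈ range (n + 1), n.choose k ^ 2 * k.choose i = n.choose i * (2 * n - i).choose n := by
  rcases lt_or_ge n i with hni | hin
  · rw [choose_eq_zero_of_lt hni, zero_mul]
    refine sum_eq_zero fun k hk => ?_
    rw [choose_eq_zero_of_lt (show k < i by grind), mul_zero]
  obtain ⟨b, rfl⟩ := exists_add_of_le hin
  have hterm : ∀ c ∈ range (b + 1), (i + b).choose (i + c) ^ 2 * (i + c).choose i
      = (i + b).choose i * (b.choose c * (i + b).choose (b - c)) := fun c hc => by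
    have hcb : c ≤ b := mem_range_succ_iff.mp hc
    rw [sq, mul_assoc, choose_mul (le_add_right i c),
      choose_symm_of_eq_add (by omega : i + b = i + c + (b - c))]
    simp only [Nat.add_sub_cancel_left]
    ring
  rw [show i + b + 1 = i + (b + 1) by ring, sum_range_add, sum_congr rfl hterm, ← mul_sum,
    ← add_choose_eq_sum_range,
    sum_eq_zero fun k hk => by rw [choose_eq_zero_of_lt (mem_range.mp hk), mul_zero], zero_add,
    show 2 * (i + b) - i = b + (i + b) by omega, ← choose_symm_add]

theorem choose_sq_eq_sum_range (n y : ℕ) :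
    y.choose n ^ 2
      = ∑ i ∈ range (2 * n + 1), n.choose i * (2 * n - i).choose n * y.choose (2 * n - i) := by
  rcases lt_or_ge y n with hyn | hny
  · rw [choose_eq_zero_of_lt hyn, zero_pow two_ne_zero]
    refine (sum_eq_zero fun i _ => ?_).symm
    rcases lt_or_ge (2 * n - i) n with h | h
    · rw [choose_eq_zero_of_lt h, mul_zero, zero_mul]
    · rw [choose_eq_zero_of_lt (hyn.trans_le h), mul_zero]
  obtain ⟨z, rfl⟩ := exists_add_of_le hny
  have hterm : ∀ i ∈ range (n + 1), (n + z).choose n * (n.choose i * z.choose (n - i))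
      = n.choose i * (2 * n - i).choose n * (n + z).choose (2 * n - i) := fun i hi => by
    have hin : i ≤ n := mem_range_succ_iff.mp hi
    rw [mul_assoc, mul_comm ((2 * n - i).choose n), choose_mul (by omega : n ≤ 2 * n - i),
      Nat.add_sub_cancel_left, show 2 * n - i - n = n - i by omega]
    ring
  rw [sq, ← sum_subset (range_subset_range.mpr (by omega : n + 1 ≤ 2 * n + 1)) fun i _ hi => by
      rw [choose_eq_zero_of_lt (by simpa using hi), zero_mul, zero_mul],
    ← sum_congr rfl hterm, ← mul_sum, ← add_choose_eq_sum_range]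

theorem sum_range_choose_sq_mul_add_choose (n y : ℕ) :
    ∑ k ∈ range (n + 1), n.choose k ^ 2 * (y + k).choose (2 * n) = y.choose n ^ 2 := by
  rw [choose_sq_eq_sum_range]
  simp_rw [add_comm y, add_choose_eq_sum_range, mul_sum]
  rw [sum_comm]
  refine sum_congr rfl fun i _ => ?_
  rw [← sum_range_choose_sq_mul_choose, sum_mul]
  exact sum_congr rfl fun k _ => by ring

end Nat

open Polynomial

theorem Polynomial.coeff_one_sq {R : Type*} [CommSemiring R] (p : R[X]) :
    (p ^ 2).coeff 1 = 2 * p.coeff 0 * p.coeff 1 := by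
  rw [sq, coeff_mul, Finset.Nat.sum_antidiagonal_eq_sum_range_succ_mk, sum_range_succ,
    sum_range_one]
  ring

theorem harmonicQ_succ (m : ℕ) : harmonicQ (m + 1) = harmonicQ m + 1 / (m + 1) := by
  simp [harmonicQ, sum_range_succ]

noncomputable def choosePoly (c m : ℕ) : ℚ[X] :=
  ∏ j ∈ range m, C ((j + 1 : ℚ)⁻¹) * (X + C ((c : ℚ) + j + 1))

theorem choosePoly_succ (c m : ℕ) :
    choosePoly c (m + 1)
      = choosePoly c m * (C ((m + 1 : ℚ)⁻¹) * (X + C ((c : ℚ) + m + 1))) :=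
  prod_range_succ _ _

theorem eval_natCast_choosePoly (c m x : ℕ) :
    (choosePoly c m).eval (x : ℚ) = ((x + c + m).choose m : ℚ) := by
  induction m with
  | zero => simp [choosePoly]
  | succ m ih =>
    have h : ((x + c + m : ℕ) + 1 : ℚ) * (x + c + m).choose m
        = ((x + c + m + 1).choose (m + 1) : ℕ) * (m + 1) := by
      exact_mod_cast Nat.add_one_mul_choose_eq (x + c + m) m
    rw [choosePoly_succ, eval_mul, ih, ← add_assoc]
    simp only [eval_mul, eval_C, eval_add, eval_X]
    field_simp
    push_cast at h ⊢
    linear_combination h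

theorem coeff_zero_choosePoly (c m : ℕ) :
    (choosePoly c m).coeff 0 = ((c + m).choose m : ℚ) := by
  rw [coeff_zero_eq_eval_zero, ← Nat.cast_zero, eval_natCast_choosePoly, zero_add]

theorem coeff_one_choosePoly (c m : ℕ) :
    (choosePoly c m).coeff 1 = ((c + m).choose m : ℚ) * (harmonicQ (c + m) - harmonicQ c) := by
  induction m with
  | zero => simp [choosePoly, coeff_one]
  | succ m ih =>
    have h : ((c + m : ℕ) + 1 : ℚ) * (c + m).choose m
        = ((c + m + 1).choose (m + 1) : ℕ) * (m + 1) := by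
      exact_mod_cast Nat.add_one_mul_choose_eq (c + m) m
    rw [choosePoly_succ, mul_left_comm, coeff_C_mul, mul_add]
    simp only [coeff_add, coeff_mul_C, coeff_mul_X, ih, coeff_zero_choosePoly, ← add_assoc,
      harmonicQ_succ]
    push_cast at h ⊢
    field_simp
    linear_combination ((harmonicQ (c + m) - harmonicQ c) * (c + m + 1) + 1) * h

theorem sum_choose_sq_mul_choosePoly (n : ℕ) :
    ∑ k ∈ range (n + 1), C ((n.choose k : ℚ) ^ 2) * choosePoly k (2 * n)
      = choosePoly n n ^ 2 := by
  refine eq_of_infinite_eval_eq _ _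
    (Set.infinite_of_injective_forall_mem Nat.cast_injective fun x => ?_)
  have h := Nat.sum_range_choose_sq_mul_add_choose n (x + 2 * n)
  simp only [Set.mem_ofPred_eq, eval_finsetSum, eval_mul, eval_C, eval_pow,
    eval_natCast_choosePoly]
  rw [add_assoc x n n, ← two_mul]
  simp_rw [add_right_comm x _ (2 * n)]
  exact_mod_cast h

theorem stmt5 (n : ℕ) :
    ∑ k ∈ range (n + 1), (n.choose k : ℚ) ^ 2 * ((2 * n + k).choose k : ℚ) * (harmonicQ (2 * n + k) - harmonicQ k)
      = 2 * ((2 * n).choose n : ℚ) ^ 2 * (harmonicQ (2 * n) - harmonicQ n) := by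
  have h := congrArg (coeff · 1) (sum_choose_sq_mul_choosePoly n)
  simp only [finsetSum_coeff, coeff_C_mul, coeff_one_choosePoly, coeff_one_sq,
    coeff_zero_choosePoly, ← two_mul] at h
  convert h using 1
  · refine sum_congr rfl fun k _ => ?_
    rw [add_comm k, Nat.choose_symm_add]
    ring
  · ring
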